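/- arXiv:math/9801052 — 2 statements merged into one kernel-verified Lean document; each statement's English description precedes it below -/
import Mathlib

section
/- Let φ = u + iv be a complex function with u, v real, lying in D_max \ D_min, such that [φ,φ](a) = 0. Then [v,u](a) = 0, [u,u](a) = [v,v](a) = 0, and both u and v satisfy [u,φ](a) = 0 = [v,φ](a). Moreover at least one of u, v lies in D_max \ D_min, and for such a real function z, the boundary condition [y,φ](a) = 0 on D_max is equivalent to [y,z](a) = 0 (modulo D_min). -/
open scoped ComplexConjugate

/-- Reduction of a lim-3 boundary condition to a real function.  `Dmax` and
`Dmin` are the maximal and minimal domains, `B f g = [f,g](a)` is the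
boundary value of the Lagrangian form (sesquilinear, with
`[g,f] = -conj [f,g]`, `[conj f, conj g] = conj [f,g]`, and vanishing when
one argument is in `Dmin`).  The lim-3 hypothesis `hdecomp` says that every
maximal domain function satisfying `[y,φ](a) = 0` is `y₀ + cφ` with
`y₀ ∈ Dmin`.  If `φ = u + iv ∈ Dmax \ Dmin` with `u, v` real and
`[φ,φ](a) = 0`, then `[v,u](a) = 0`, `[u,u](a) = [v,v](a) = 0`,
`[u,φ](a) = 0 = [v,φ](a)`, at least one of `u, v` lies in `Dmax \ Dmin`,
and for such a real function `z` the boundary condition `[y,φ](a) = 0` is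
equivalent to `[y,z](a) = 0` on `Dmax`. -/
theorem lim3_real_boundary_condition
    (Dmax Dmin : Submodule ℂ (ℝ → ℂ))
    (hsub : Dmin ≤ Dmax)
    (hDmax_star : ∀ f ∈ Dmax, (fun x => conj (f x)) ∈ Dmax)
    (hDmin_star : ∀ f ∈ Dmin, (fun x => conj (f x)) ∈ Dmin)
    (B : (ℝ → ℂ) → (ℝ → ℂ) → ℂ)
    (hB_add₁ : ∀ f g h, B (f + g) h = B f h + B g h)
    (hB_smul₁ : ∀ (c : ℂ) f g, B (c • f) g = c * B f g)
    (hB_add₂ : ∀ f g h, B f (g + h) = B f g + B f h)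
    (hB_smul₂ : ∀ (c : ℂ) f g, B f (c • g) = conj c * B f g)
    (hB_skew : ∀ f g, B g f = -conj (B f g))
    (hB_conj : ∀ f g,
      B (fun x => conj (f x)) (fun x => conj (g x)) = conj (B f g))
    (hDmin_ann : ∀ f ∈ Dmin, ∀ g ∈ Dmax, B f g = 0)
    (φ u v : ℝ → ℂ)
    (hu_real : (fun x => conj (u x)) = u)
    (hv_real : (fun x => conj (v x)) = v)
    (hφ : φ = u + Complex.I • v)
    (hφ_max : φ ∈ Dmax) (hφ_min : φ ∉ Dmin)
    (hφφ : B φ φ = 0)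
    (hdecomp : ∀ y ∈ Dmax, B y φ = 0 →
      ∃ y₀ ∈ Dmin, ∃ c : ℂ, y = y₀ + c • φ) :
    B v u = 0 ∧ B u u = 0 ∧ B v v = 0 ∧ B u φ = 0 ∧ B v φ = 0 ∧
    ((u ∈ Dmax ∧ u ∉ Dmin) ∨ (v ∈ Dmax ∧ v ∉ Dmin)) ∧
    ∃ z : ℝ → ℂ, (fun x => conj (z x)) = z ∧ z ∈ Dmax ∧ z ∉ Dmin ∧
      ∀ y ∈ Dmax, (B y φ = 0 ↔ B y z = 0) := by
  -- real functions pair to zero with themselves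
  have hBuu : B u u = 0 := by
    have h1 := hB_conj u u
    rw [hu_real] at h1
    have h3 : B u u = -B u u := (hB_skew u u).trans (by rw [← h1])
    linear_combination h3 / 2
  have hBvv : B v v = 0 := by
    have h1 := hB_conj v v
    rw [hv_real] at h1
    have h3 : B v v = -B v v := (hB_skew v v).trans (by rw [← h1])
    linear_combination h3 / 2
  have hvu_real : B v u = conj (B v u) := by
    have h1 := hB_conj v u
    rw [hu_real, hv_real] at h1
    exact h1
  have hBuv : B u v = -B v u := by
    rw [hB_skew v u, ← hvu_real]
  -- expand B φ φ = 0
  have hBvu : B v u = 0 := by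
    rw [hφ] at hφφ
    simp only [hB_add₁, hB_add₂, hB_smul₁, hB_smul₂, Complex.conj_I] at hφφ
    rw [hBuu, hBvv, hBuv] at hφφ
    have h2 : (2 * Complex.I) * B v u = 0 := by linear_combination hφφ
    have h2I : (2 * Complex.I) ≠ 0 := by
      simp [Complex.I_ne_zero]
    exact (mul_eq_zero.mp h2).resolve_left h2I
  have hBuv0 : B u v = 0 := by rw [hBuv, hBvu, neg_zero]
  have hBuφ : B u φ = 0 := by
    rw [hφ, hB_add₂, hB_smul₂, hBuu, hBuv0]
    ring
  have hBvφ : B v φ = 0 := by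
    rw [hφ, hB_add₂, hB_smul₂, hBvu, hBvv]
    ring
  -- membership of u and v in Dmax
  have hψ_max := hDmax_star φ hφ_max
  have hψ_eq : (fun x => conj (φ x)) = u - Complex.I • v := by
    funext x
    have hu := congrFun hu_real x
    have hv := congrFun hv_real x
    simp only [hφ, Pi.add_apply, Pi.smul_apply, smul_eq_mul, Pi.sub_apply,
      map_add, map_mul, Complex.conj_I] at *
    rw [hu, hv]
    ring
  rw [hψ_eq] at hψ_max
  have hu_max : u ∈ Dmax := by
    have hmem : ((2:ℂ)⁻¹) • (φ + (u - Complex.I • v)) ∈ Dmax :=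
      Dmax.smul_mem _ (Dmax.add_mem hφ_max hψ_max)
    have heq : ((2:ℂ)⁻¹) • (φ + (u - Complex.I • v)) = u := by
      funext x
      simp only [hφ, Pi.smul_apply, Pi.add_apply, Pi.sub_apply, smul_eq_mul]
      ring
    rwa [heq] at hmem
  have hv_max : v ∈ Dmax := by
    have hmem : ((-(2:ℂ)⁻¹) * Complex.I) • (φ - (u - Complex.I • v)) ∈ Dmax :=
      Dmax.smul_mem _ (Dmax.sub_mem hφ_max hψ_max)
    have heq : ((-(2:ℂ)⁻¹) * Complex.I) • (φ - (u - Complex.I • v)) = v := by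
      funext x
      simp only [hφ, Pi.smul_apply, Pi.add_apply, Pi.sub_apply, smul_eq_mul]
      linear_combination (-(v x)) * Complex.I_sq
    rwa [heq] at hmem
  -- at least one of u, v not in Dmin
  have hnotboth : u ∉ Dmin ∨ v ∉ Dmin := by
    by_contra h
    push_neg at h
    exact hφ_min (hφ ▸ Dmin.add_mem h.1 (Dmin.smul_mem _ h.2))
  -- the key equivalence for a suitable real z
  have key : ∀ z : ℝ → ℂ, z ∈ Dmax → z ∉ Dmin → B z φ = 0 →
      ∀ y ∈ Dmax, (B y φ = 0 ↔ B y z = 0) := by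
    intro z hzmax hzmin hzφ y hy
    obtain ⟨z₀, hz₀, c, hz⟩ := hdecomp z hzmax hzφ
    have hc : c ≠ 0 := by
      rintro rfl
      have hzz : z = z₀ := by rw [hz]; simp
      exact hzmin (hzz ▸ hz₀)
    have hyz₀ : B y z₀ = 0 := by
      rw [hB_skew z₀ y, hDmin_ann z₀ hz₀ y hy, map_zero, neg_zero]
    have hyz : B y z = conj c * B y φ := by
      rw [hz, hB_add₂, hB_smul₂, hyz₀, zero_add]
    rw [hyz]
    constructor
    · intro h; rw [h, mul_zero]
    · intro h
      rcases mul_eq_zero.mp h with h' | h'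
      · exact absurd h' (by simpa using hc)
      · exact h'
  refine ⟨hBvu, hBuu, hBvv, hBuφ, hBvφ, ?_, ?_⟩
  · rcases hnotboth with h | h
    · exact Or.inl ⟨hu_max, h⟩
    · exact Or.inr ⟨hv_max, h⟩
  · rcases hnotboth with h | h
    · exact ⟨u, hu_real, hu_max, h, key u hu_max h hBuφ⟩
    · exact ⟨v, hv_real, hv_max, h, key v hv_max h hBvφ⟩
end

section
/- Let Φ = [[U_L, U_R],[V_L, V_R]] be a 4×4 block matrix satisfying U_L^T V_L - V_L^T U_L = 0, U_R^T V_L - V_R^T U_L = I₂, and U_R^T V_R - V_R^T U_R = K where K = [[0,1],[-1,0]]. Then Φ^{-1} = [[-V_R^T - K V_L^T, U_R^T + K U_L^T],[V_L^T, -U_L^T]]. -/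
open Matrix

/-- Inversion of the fundamental matrix `Φ = [[U_L, U_R],[V_L, V_R]]` for
complex boundary conditions at a lim-4 endpoint, where
`K = [[0,1],[-1,0]]`. -/
theorem fundamental_matrix_inverse_complex
    (UL UR VL VR : Matrix (Fin 2) (Fin 2) ℂ)
    (K : Matrix (Fin 2) (Fin 2) ℂ) (hK : K = !![0, 1; -1, 0])
    (hL : ULᵀ * VL - VLᵀ * UL = 0)
    (hLR : URᵀ * VL - VRᵀ * UL = 1)
    (hR : URᵀ * VR - VRᵀ * UR = K) :
    (Matrix.fromBlocks UL UR VL VR)⁻¹ =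
      Matrix.fromBlocks (-(VRᵀ) - K * VLᵀ) (URᵀ + K * ULᵀ)
        (VLᵀ) (-(ULᵀ)) := by
  have hLt : VLᵀ * UL - ULᵀ * VL = 0 := by
    have := congrArg Matrix.transpose hL
    simpa [Matrix.transpose_sub, Matrix.transpose_mul] using this
  have hLRt : VLᵀ * UR - ULᵀ * VR = 1 := by
    have := congrArg Matrix.transpose hLR
    simpa [Matrix.transpose_sub, Matrix.transpose_mul] using this
  apply Matrix.inv_eq_left_inv
  rw [Matrix.fromBlocks_multiply]
  have h11 : (-(VRᵀ) - K * VLᵀ) * UL + (URᵀ + K * ULᵀ) * VL = 1 := by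
    linear_combination (norm := noncomm_ring) hLR + K * hL
  have h12 : (-(VRᵀ) - K * VLᵀ) * UR + (URᵀ + K * ULᵀ) * VR = 0 := by
    linear_combination (norm := noncomm_ring) hR - K * hLRt
  have h21 : VLᵀ * UL + -(ULᵀ) * VL = 0 := by
    linear_combination (norm := noncomm_ring) hLt
  have h22 : VLᵀ * UR + -(ULᵀ) * VR = 1 := by
    linear_combination (norm := noncomm_ring) hLRt
  rw [h11, h12, h21, h22, Matrix.fromBlocks_one]
end
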